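/- arXiv:2109.01237 — 3 statements merged into one kernel-verified Lean document; each statement's English description precedes it below -/
import Mathlib

section
/- Let $(X_t)$ be a Markov chain on a finite state space $V$ with transition probabilities $p$, and fix a target state $v$ with $X_0 \ne v$. Define $H_v(t) = \prod_{i=0}^{t}(1 - p(X_i,v))$ (with $H_v(-1)=1$), let $r_v$ be a stopping time, and define $\xi^v_s = \mathbf{1}\{T_v > s\wedge r_v\}/H_v(s\wedge r_v - 1)$, where $T_v$ is the hitting time of $v$. Then $(\xi^v_s)_{s\ge 0}$ is a martingale with respect to the natural filtration of $(X_t)$. -/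
/-!
Up to the stopping time `r` the process is `1{T_v > s} / H_v(s - 1)`. From `u = ω_s ≠ v` the next
step avoids `v` with probability exactly `1 - p(u, v)`, the factor by which `H_v` grows, so the
one-step average is unchanged. After `r` the process is frozen, and since `{r ≤ s}` is decided by
`ω_0, …, ω_s`, the next step cannot move the freezing time.
-/

open Finset

open scoped Classical in
/-- The process `ξ^v_s = 1{T_v > s ∧ r_v} / H_v(s ∧ r_v - 1)`, evaluated on a
trajectory `ω`, where `H_v(t) = ∏_{i=0}^t (1 - p(ω_i, v))` (so the product below
over `range m` is `H_v(m-1)`, with `H_v(-1) = 1`). -/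
noncomputable def xiProc {V : Type*} [Fintype V]
    (p : V → V → ℝ) (v : V) (r : (ℕ → V) → ℕ) (s : ℕ) (ω : ℕ → V) : ℝ :=
  (if ∀ t ≤ min s (r ω), ω t ≠ v then (1 : ℝ) else 0) /
    ∏ i ∈ Finset.range (min s (r ω)), (1 - p (ω i) v)

theorem min_succ_eq_of_eqOn_Iic {V : Type*} {r : (ℕ → V) → ℕ}
    (hstop : ∀ (ω ω' : ℕ → V) (n : ℕ), (∀ i ≤ n, ω i = ω' i) → (r ω ≤ n ↔ r ω' ≤ n))
    {ω ω' : ℕ → V} {n : ℕ} (h : ∀ i ≤ n, ω i = ω' i) :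
    min (n + 1) (r ω) = min (n + 1) (r ω') := by
  have hle : ∀ k ≤ n, (r ω ≤ k ↔ r ω' ≤ k) :=
    fun k hk => hstop ω ω' k fun i hi => h i (hi.trans hk)
  by_cases hn : r ω ≤ n
  · have h₁ : r ω' ≤ r ω := (hle _ hn).mp le_rfl
    have h₂ : r ω ≤ r ω' := (hle _ (h₁.trans hn)).mpr le_rfl
    omega
  · have : ¬ r ω' ≤ n := (hle n le_rfl).not.mp hn
    omega

section Unstopped

variable {V : Type*} (p : V → V → ℝ) (v : V)

open scoped Classical in
/-- `1{T_v > m} / H_v(m - 1)`, i.e. `ξ^v` without the stopping time `r`. -/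
noncomputable def xiUnstopped (m : ℕ) (ω : ℕ → V) : ℝ :=
  (if ∀ t ≤ m, ω t ≠ v then (1 : ℝ) else 0) / ∏ i ∈ range m, (1 - p (ω i) v)

theorem xiProc_eq_xiUnstopped [Fintype V] (r : (ℕ → V) → ℕ) (s : ℕ) (ω : ℕ → V) :
    xiProc p v r s ω = xiUnstopped p v (min s (r ω)) ω :=
  rfl

variable {p v}

theorem xiUnstopped_congr {m : ℕ} {ω ω' : ℕ → V} (h : ∀ i ≤ m, ω i = ω' i) :
    xiUnstopped p v m ω = xiUnstopped p v m ω' := by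
  classical
  have hind : (∀ t ≤ m, ω t ≠ v) ↔ ∀ t ≤ m, ω' t ≠ v :=
    forall₂_congr fun t ht => by rw [h t ht]
  have hprod : ∏ i ∈ range m, (1 - p (ω i) v) = ∏ i ∈ range m, (1 - p (ω' i) v) :=
    prod_congr rfl fun i hi => by rw [h i (mem_range.mp hi).le]
  rw [xiUnstopped, xiUnstopped, hprod, if_congr hind rfl rfl]

theorem xiUnstopped_succ_update [DecidableEq V] (s : ℕ) (ω : ℕ → V) (y : V) :
    xiUnstopped p v (s + 1) (Function.update ω (s + 1) y)
      = xiUnstopped p v s ω * (if y = v then 0 else 1) / (1 - p (ω s) v) := by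
  have hpast : ∀ i ≤ s, Function.update ω (s + 1) y i = ω i :=
    fun i hi => Function.update_of_ne (by omega) _ _
  have hind : (∀ t ≤ s + 1, Function.update ω (s + 1) y t ≠ v)
      ↔ (∀ t ≤ s, ω t ≠ v) ∧ y ≠ v := by
    constructor
    · intro h
      exact ⟨fun t ht => hpast t ht ▸ h t (by omega), by simpa using h (s + 1) le_rfl⟩
    · rintro ⟨h, hy⟩ t ht
      rcases Nat.le_succ_iff.mp ht with ht | rfl
      · rw [hpast t ht]; exact h t ht
      · simpa using hy
  have hprod : ∏ i ∈ range (s + 1), (1 - p (Function.update ω (s + 1) y i) v)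
      = (∏ i ∈ range s, (1 - p (ω i) v)) * (1 - p (ω s) v) := by
    rw [prod_range_succ, hpast s le_rfl,
      prod_congr rfl fun i hi => by rw [hpast i (mem_range.mp hi).le]]
  rw [xiUnstopped, xiUnstopped, hprod]
  split_ifs with hsucc hpre hy hy
  all_goals first
    | exact absurd hy (hind.mp hsucc).2
    | exact absurd (hind.mp hsucc).1 hpre
    | exact absurd (hind.mpr ⟨‹_›, ‹_›⟩) hsucc
    | rw [div_mul_eq_div_div]; ring

theorem xiUnstopped_eq_zero {m t : ℕ} {ω : ℕ → V} (ht : t ≤ m) (hv : ω t = v) :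
    xiUnstopped p v m ω = 0 := by
  have : ¬ ∀ t ≤ m, ω t ≠ v := fun h => h t ht hv
  simp only [xiUnstopped, this, if_false, zero_div]

theorem sum_mul_xiUnstopped_succ_update [Fintype V] [DecidableEq V]
    (hp1 : ∀ u x : V, u ≠ x → p u x < 1)
    (hrow : ∀ u : V, ∑ x : V, p u x = 1) (s : ℕ) (ω : ℕ → V) :
    ∑ y : V, p (ω s) y * xiUnstopped p v (s + 1) (Function.update ω (s + 1) y)
      = xiUnstopped p v s ω := by
  simp only [xiUnstopped_succ_update]
  by_cases hs : ω s = v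
  · simp [xiUnstopped_eq_zero le_rfl hs]
  have hq : 1 - p (ω s) v ≠ 0 := sub_ne_zero.mpr (hp1 _ _ hs).ne'
  have hstep : ∑ y, p (ω s) y * (if y = v then 0 else 1) = 1 - p (ω s) v := by
    simp [mul_ite, sum_ite, filter_ne', sum_erase_eq_sub, hrow]
  calc ∑ y, p (ω s) y * (xiUnstopped p v s ω * (if y = v then 0 else 1) / (1 - p (ω s) v))
      = xiUnstopped p v s ω * (∑ y, p (ω s) y * (if y = v then 0 else 1)) / (1 - p (ω s) v) := by
        rw [mul_sum, sum_div]
        exact sum_congr rfl fun y _ => by ring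
    _ = xiUnstopped p v s ω := by rw [hstep, mul_div_cancel_right₀ _ hq]

end Unstopped

theorem xiProc_martingale_general {V : Type*} [Fintype V]
    (p : V → V → ℝ)
    (hp1 : ∀ u x : V, u ≠ x → p u x < 1)
    (hrow : ∀ u : V, ∑ x : V, p u x = 1)
    (v : V) (r : (ℕ → V) → ℕ)
    (hstop : ∀ (ω ω' : ℕ → V) (n : ℕ),
      (∀ i ≤ n, ω i = ω' i) → (r ω ≤ n ↔ r ω' ≤ n))
    (s : ℕ) (ω : ℕ → V) :
    ∑ y : V, p (ω s) y * xiProc p v r (s + 1) (Function.update ω (s + 1) y)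
      = xiProc p v r s ω := by
  have hpast : ∀ y, ∀ i ≤ s, ω i = Function.update ω (s + 1) y i :=
    fun y i hi => (Function.update_of_ne (by omega) _ _).symm
  have hmin : ∀ y, min (s + 1) (r (Function.update ω (s + 1) y)) = min (s + 1) (r ω) :=
    fun y => (min_succ_eq_of_eqOn_Iic hstop (hpast y)).symm
  simp only [xiProc_eq_xiUnstopped, hmin]
  rcases (min_le_left (s + 1) (r ω)).lt_or_eq with hstopped | hrunning
  · have hfrozen : min (s + 1) (r ω) = min s (r ω) := by omega
    have hsummand : ∀ y, xiUnstopped p v (min s (r ω)) (Function.update ω (s + 1) y)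
        = xiUnstopped p v (min s (r ω)) ω :=
      fun y => (xiUnstopped_congr fun i hi => hpast y i (hi.trans (min_le_left _ _))).symm
    simp only [hfrozen, hsummand, ← sum_mul, hrow, one_mul]
  · classical
    rw [hrunning, show min s (r ω) = s by omega]
    exact sum_mul_xiUnstopped_succ_update hp1 hrow s ω

/-- `ξ^v_s` is a martingale for the natural filtration of the chain: for every
time `s` and every trajectory `ω` (with `ω 0 ≠ v`), the conditional expectation
of `ξ^v_{s+1}` given the history `ω_0,…,ω_s` equals `ξ^v_s`.  Here `r` is an
arbitrary stopping time of the chain. -/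
theorem xiProc_martingale {V : Type*} [Fintype V]
    (p : V → V → ℝ) (hp0 : ∀ u x : V, 0 ≤ p u x)
    (hp1 : ∀ u x : V, u ≠ x → p u x < 1)
    (hrow : ∀ u : V, ∑ x : V, p u x = 1)
    (v : V) (r : (ℕ → V) → ℕ)
    (hstop : ∀ (ω ω' : ℕ → V) (n : ℕ),
      (∀ i ≤ n, ω i = ω' i) → (r ω ≤ n ↔ r ω' ≤ n))
    (s : ℕ) (ω : ℕ → V) (hω0 : ω 0 ≠ v) :
    ∑ y : V, p (ω s) y * xiProc p v r (s + 1) (Function.update ω (s + 1) y)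
      = xiProc p v r s ω :=
  xiProc_martingale_general p hp1 hrow v r hstop s ω
end

section
/- Let $(X_t)$ be a Markov chain on finite state space $V$, $W \subseteq V$ with $|W|=m$ and $X_0 \notin W$, and let $\lambda = 1 - \max\{p(v,w) : v \in V,\; v \ne w \in W\} > 0$. With $L \ge 1$, define for each $w \in W$: $H_w(t) = \prod_{i=0}^t(1-p(X_i,w))$, $r_w = \min\{t : H_w(t) < \lambda/L\}$, and the martingale $\xi^w_s = \mathbf{1}\{T_w > s\wedge r_w\}/H_w(s\wedge r_w - 1)$. Let $\xi_s = \sum_{w\in W}\xi^w_s$. Then for every $s \ge 1$, $|\xi_s - \xi_{s-1}| \le L/\lambda^2$. -/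
open Finset

/-- `HmP p ω w t = ∏_{i<t} (1 - p(ω_i,w))`, i.e. `H_w(t-1)` with `H_w(-1)=1`. -/
noncomputable def HmP {V : Type*} (p : V → V → ℝ) (ω : ℕ → V) (w : V) (t : ℕ) : ℝ :=
  ∏ i ∈ Finset.range t, (1 - p (ω i) w)

/-- `minSR p lam L ω w s = min s r_w`, where
`r_w = min{t : H_w(t) < lam/L}` (`= ∞` if no such `t`). -/
noncomputable def minSR {V : Type*} (p : V → V → ℝ) (lam L : ℝ)
    (ω : ℕ → V) (w : V) (s : ℕ) : ℕ :=
  sInf ({t : ℕ | HmP p ω w (t + 1) < lam / L} ∪ {s})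

open scoped Classical in
/-- `ξ_s = ∑_{w∈W} 1{T_w > s ∧ r_w}/H_w(s ∧ r_w - 1)` evaluated on the
trajectory `ω`. -/
noncomputable def xiSum {V : Type*} (p : V → V → ℝ) (W : Finset V) (lam L : ℝ)
    (ω : ℕ → V) (s : ℕ) : ℝ :=
  ∑ w ∈ W, (if ∀ t ≤ minSR p lam L ω w s, ω t ≠ w then (1 : ℝ) else 0) /
      HmP p ω w (minSR p lam L ω w s)

/-! Fix `s ≥ 1` and write `u = X_{s-1}`. A term of `ξ` frozen by `r_w` or by an earlier hit of
`w` does not move. Otherwise `H_w(s-2) ≥ λ/L`, so the term of `w = X_s`, just hit, drops from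
`1/H_w(s-2) ≤ L/λ ≤ L/λ²` to `0`, while every other live term grows by
`1/H_w(s-1) - 1/H_w(s-2) = p(u,w)/H_w(s-1) ≤ p(u,w) · L/λ²`, because
`H_w(s-1) = H_w(s-2)(1 - p(u,w)) ≥ (λ/L) · λ` for `u ≠ w`. At most one term drops and the
`p(u,w)` sum to at most one, so the increment lies in `[-L/λ², L/λ²]`. -/

theorem Nat.sInf_union_singleton_of_mem {S : Set ℕ} {t k : ℕ} (ht : t ∈ S) (htk : t ≤ k) :
    sInf (S ∪ {k}) = sInf S := by
  rw [csInf_union (OrderBot.bddBelow S) ⟨t, ht⟩ (OrderBot.bddBelow _) (Set.singleton_nonempty k),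
    csInf_singleton]
  exact inf_eq_left.mpr ((Nat.sInf_le ht).trans htk)

theorem Nat.sInf_union_singleton_of_forall_lt_notMem {S : Set ℕ} {s : ℕ}
    (h : ∀ t < s, t ∉ S) : sInf (S ∪ {s}) = s := by
  refine le_antisymm (Nat.sInf_le (Or.inr rfl)) (le_csInf ⟨s, Or.inr rfl⟩ ?_)
  rintro t (htS | rfl)
  · exact not_lt.mp fun hts => h t hts htS
  · exact le_rfl

theorem inv_le_div_sq_of_div_le {lam L H : ℝ} (hlam0 : 0 < lam) (hlam1 : lam ≤ 1) (hL : 0 < L)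
    (hH : lam / L ≤ H) : H⁻¹ ≤ L / lam ^ 2 := by
  have hH0 : 0 < H := (div_pos hlam0 hL).trans_le hH
  rw [div_le_iff₀ hL] at hH
  rw [inv_le_iff_one_le_mul₀ hH0, div_mul_eq_mul_div, le_div_iff₀ (by positivity)]
  nlinarith

theorem inv_mul_one_sub_sub_inv_le {lam L H q : ℝ} (hlam0 : 0 < lam) (hL : 0 < L)
    (hH : lam / L ≤ H) (hq0 : 0 ≤ q) (hq : lam ≤ 1 - q) :
    (H * (1 - q))⁻¹ - H⁻¹ ≤ L / lam ^ 2 * q := by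
  have hH0 : 0 < H := (div_pos hlam0 hL).trans_le hH
  have hden : lam ^ 2 / L ≤ H * (1 - q) := by
    calc lam ^ 2 / L = lam / L * lam := by ring
      _ ≤ H * (1 - q) := mul_le_mul hH hq hlam0.le hH0.le
  calc (H * (1 - q))⁻¹ - H⁻¹ = q / (H * (1 - q)) := by
        field_simp [(hlam0.trans_le hq).ne']; ring
    _ ≤ q / (lam ^ 2 / L) := div_le_div_of_nonneg_left hq0 (by positivity) hden
    _ = L / lam ^ 2 * q := by field_simp

theorem abs_sum_le_of_bounds {ι : Type*} [DecidableEq ι] (W : Finset ι) (f q : ι → ℝ) (x : ι)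
    {C : ℝ} (hC : 0 ≤ C) (hq : ∑ w ∈ W, q w ≤ 1)
    (hf : ∀ w ∈ W, -C * (if x = w then 1 else 0) ≤ f w ∧ f w ≤ C * q w) :
    |∑ w ∈ W, f w| ≤ C := by
  rw [abs_le]
  constructor
  · calc -C ≤ -C * ∑ w ∈ W, (if x = w then 1 else 0) := by
          rw [Finset.sum_ite_eq]; split_ifs <;> linarith
      _ ≤ ∑ w ∈ W, f w := by
          rw [Finset.mul_sum]; exact Finset.sum_le_sum fun w hw => (hf w hw).1
  · calc ∑ w ∈ W, f w ≤ C * ∑ w ∈ W, q w := by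
          rw [Finset.mul_sum]; exact Finset.sum_le_sum fun w hw => (hf w hw).2
      _ ≤ C := mul_le_of_le_one_right hC hq

section

variable {V : Type*} (p : V → V → ℝ) (lam L : ℝ) (ω : ℕ → V) (w : V)

open scoped Classical in
noncomputable def xiTerm (s : ℕ) : ℝ :=
  (if ∀ t ≤ minSR p lam L ω w s, ω t ≠ w then (1 : ℝ) else 0) / HmP p ω w (minSR p lam L ω w s)

theorem xiSum_eq_sum_xiTerm (W : Finset V) (s : ℕ) :
    xiSum p W lam L ω s = ∑ w ∈ W, xiTerm p lam L ω w s :=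
  rfl

theorem HmP_zero : HmP p ω w 0 = 1 :=
  Finset.prod_range_zero _

theorem HmP_succ (k : ℕ) : HmP p ω w (k + 1) = HmP p ω w k * (1 - p (ω k) w) :=
  Finset.prod_range_succ _ k

variable {p lam L ω w}

theorem minSR_succ_of_exists_lt {k : ℕ} (h : ∃ t ≤ k, HmP p ω w (t + 1) < lam / L) :
    minSR p lam L ω w (k + 1) = minSR p lam L ω w k := by
  obtain ⟨t, htk, ht⟩ := h
  rw [minSR, minSR, Nat.sInf_union_singleton_of_mem ht (htk.trans k.le_succ),
    Nat.sInf_union_singleton_of_mem ht htk]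

theorem minSR_of_forall_le {s : ℕ} (h : ∀ t ≤ s, lam / L ≤ HmP p ω w t) :
    minSR p lam L ω w s = s :=
  Nat.sInf_union_singleton_of_forall_lt_notMem fun t hts => not_lt.mpr (h (t + 1) hts)

theorem xiTerm_succ_of_exists_lt {k : ℕ} (h : ∃ t ≤ k, HmP p ω w (t + 1) < lam / L) :
    xiTerm p lam L ω w (k + 1) = xiTerm p lam L ω w k := by
  rw [xiTerm, xiTerm, minSR_succ_of_exists_lt h]

open scoped Classical in
theorem xiTerm_of_forall_le {s : ℕ} (h : ∀ t ≤ s, lam / L ≤ HmP p ω w t) :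
    xiTerm p lam L ω w s = (if ∀ t ≤ s, ω t ≠ w then (1 : ℝ) else 0) / HmP p ω w s := by
  rw [xiTerm, minSR_of_forall_le h]

open scoped Classical in
theorem xiTerm_succ_sub_bounds_of_forall_le (hp0 : ∀ u, 0 ≤ p u w) (hlam0 : 0 < lam)
    (hlam1 : lam ≤ 1) (hL : 0 < L) (hlamw : ∀ u, u ≠ w → p u w ≤ 1 - lam) {k : ℕ}
    (hrun : ∀ t ≤ k + 1, lam / L ≤ HmP p ω w t) :
    -(L / lam ^ 2) * (if ω (k + 1) = w then 1 else 0) ≤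
        xiTerm p lam L ω w (k + 1) - xiTerm p lam L ω w k ∧
      xiTerm p lam L ω w (k + 1) - xiTerm p lam L ω w k ≤ L / lam ^ 2 * p (ω k) w := by
  have hC : 0 ≤ L / lam ^ 2 := by positivity
  have hq0 := hp0 (ω k)
  have hHk : lam / L ≤ HmP p ω w k := hrun k k.le_succ
  have hH0 : 0 < HmP p ω w k := (div_pos hlam0 hL).trans_le hHk
  rw [xiTerm_of_forall_le hrun, xiTerm_of_forall_le fun t ht => hrun t (by omega), HmP_succ]
  by_cases hdead : ∀ t ≤ k, ω t ≠ w
  swap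
  · have hdead' : ¬ ∀ t ≤ k + 1, ω t ≠ w := fun h => hdead fun t ht => h t (by omega)
    rw [if_neg hdead, if_neg hdead', zero_div, zero_div, sub_self]
    refine ⟨?_, mul_nonneg hC hq0⟩
    split_ifs <;> linarith
  by_cases hhit : ω (k + 1) = w
  · have hdead' : ¬ ∀ t ≤ k + 1, ω t ≠ w := fun h => h (k + 1) le_rfl hhit
    rw [if_neg hdead', if_pos hdead, if_pos hhit, zero_div, zero_sub, one_div]
    constructor <;> nlinarith [inv_pos.mpr hH0, inv_le_div_sq_of_div_le hlam0 hlam1 hL hHk]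
  · have halive : ∀ t ≤ k + 1, ω t ≠ w := fun t ht =>
      (Nat.le_succ_iff.mp ht).elim (hdead t) fun h => h ▸ hhit
    have hq : lam ≤ 1 - p (ω k) w := by linarith [hlamw (ω k) (hdead k le_rfl)]
    rw [if_pos halive, if_pos hdead, if_neg hhit, mul_zero, one_div, one_div]
    have hstep : HmP p ω w k * (1 - p (ω k) w) ≤ HmP p ω w k :=
      mul_le_of_le_one_right hH0.le (by linarith)
    exact ⟨sub_nonneg.mpr (inv_anti₀ (mul_pos hH0 (hlam0.trans_le hq)) hstep),
      inv_mul_one_sub_sub_inv_le hlam0 hL hHk hq0 hq⟩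

open scoped Classical in
theorem xiTerm_succ_sub_bounds (hp0 : ∀ u, 0 ≤ p u w) (hlam0 : 0 < lam) (hlam1 : lam ≤ 1)
    (hL : 1 ≤ L) (hlamw : ∀ u, u ≠ w → p u w ≤ 1 - lam) (k : ℕ) :
    -(L / lam ^ 2) * (if ω (k + 1) = w then 1 else 0) ≤
        xiTerm p lam L ω w (k + 1) - xiTerm p lam L ω w k ∧
      xiTerm p lam L ω w (k + 1) - xiTerm p lam L ω w k ≤ L / lam ^ 2 * p (ω k) w := by
  have hL0 : 0 < L := one_pos.trans_le hL
  by_cases hstop : ∃ t ≤ k, HmP p ω w (t + 1) < lam / L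
  · rw [xiTerm_succ_of_exists_lt hstop, sub_self]
    refine ⟨?_, mul_nonneg (by positivity) (hp0 (ω k))⟩
    split_ifs <;> nlinarith [div_nonneg hL0.le (sq_nonneg lam)]
  push Not at hstop
  refine xiTerm_succ_sub_bounds_of_forall_le hp0 hlam0 hlam1 hL0 hlamw ?_
  rintro (_ | t) ht
  · rw [HmP_zero]; exact div_le_one_of_le₀ (hlam1.trans hL) hL0.le
  · exact hstop t (by omega)

end

theorem xiSum_increment_bound_general {V : Type*} [Fintype V]
    (p : V → V → ℝ) (hp0 : ∀ u x : V, 0 ≤ p u x)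
    (hrow : ∀ u : V, ∑ x : V, p u x = 1)
    (W : Finset V)
    (lam L : ℝ) (hlam0 : 0 < lam) (hlam1 : lam ≤ 1) (hL : 1 ≤ L)
    (hlamp : ∀ u w : V, w ∈ W → u ≠ w → p u w ≤ 1 - lam)
    (ω : ℕ → V) (s : ℕ) (hs : 1 ≤ s) :
    |xiSum p W lam L ω s - xiSum p W lam L ω (s - 1)| ≤ L / lam ^ 2 := by
  classical
  obtain ⟨k, rfl⟩ : ∃ k, s = k + 1 := ⟨s - 1, by omega⟩
  rw [Nat.add_sub_cancel, xiSum_eq_sum_xiTerm, xiSum_eq_sum_xiTerm, ← Finset.sum_sub_distrib]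
  have hW : ∑ w ∈ W, p (ω k) w ≤ 1 := hrow (ω k) ▸
    Finset.sum_le_sum_of_subset_of_nonneg (Finset.subset_univ W) fun _ _ _ => hp0 _ _
  exact abs_sum_le_of_bounds W _ _ (ω (k + 1)) (by positivity) hW fun w hw =>
    xiTerm_succ_sub_bounds (hp0 · w) hlam0 hlam1 hL (hlamp · w hw) k

/-- The martingale `ξ_s` has increments bounded by `L/λ²`:
`|ξ_s - ξ_{s-1}| ≤ L/λ²` for all `s ≥ 1`. -/
theorem xiSum_increment_bound {V : Type*} [Fintype V]
    (p : V → V → ℝ) (hp0 : ∀ u x : V, 0 ≤ p u x) (hp1 : ∀ u x : V, p u x ≤ 1)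
    (hrow : ∀ u : V, ∑ x : V, p u x = 1)
    (W : Finset V) (m : ℕ) (hm : W.card = m)
    (lam L : ℝ) (hlam0 : 0 < lam) (hlam1 : lam ≤ 1) (hL : 1 ≤ L)
    (hlamp : ∀ u w : V, w ∈ W → u ≠ w → p u w ≤ 1 - lam)
    (ω : ℕ → V) (hω0 : ω 0 ∉ W) (s : ℕ) (hs : 1 ≤ s) :
    |xiSum p W lam L ω s - xiSum p W lam L ω (s - 1)| ≤ L / lam ^ 2 :=
  xiSum_increment_bound_general p hp0 hrow W lam L hlam0 hlam1 hL hlamp ω s hs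
end

section
/- Let $Y$ be a real-valued random variable with $\mathbb{E}[Y]=0$, $|Y| \le c$ almost surely, and $\mathbb{E}[|Y|] \le M$. Then for any real $\zeta$ with $|\zeta| c \le 1$, $\mathbb{E}[e^{\zeta Y}] \le e^{8\zeta^2 M c}$. -/
open MeasureTheory

lemma exp_le_one_add_add_two_sq {x : ℝ} (hx : |x| ≤ 1) :
    Real.exp x ≤ 1 + x + 2 * x ^ 2 := by
  have h := Real.exp_bound hx (n := 2) (by norm_num)
  simp [Finset.sum_range_succ] at h
  have h2 := (abs_le.mp h).2
  nlinarith [sq_abs x, sq_nonneg x]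

/-- MGF bound using the first absolute moment: if `E[Y]=0`, `|Y| ≤ c` a.s. and
`E[|Y|] ≤ M`, then for `|ζ|c ≤ 1`, `E[e^{ζY}] ≤ e^{8ζ²Mc}`. -/
theorem mgf_bound_first_moment {Ω : Type*} [MeasurableSpace Ω]
    (ℙ : Measure Ω) [IsProbabilityMeasure ℙ]
    (Y : Ω → ℝ) (hmeas : Measurable Y)
    (c M : ℝ) (hc : 0 < c) (hM : 0 < M)
    (hbdd : ∀ᵐ ω ∂ℙ, |Y ω| ≤ c)
    (hmean : ∫ ω, Y ω ∂ℙ = 0)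
    (habs : ∫ ω, |Y ω| ∂ℙ ≤ M)
    (ζ : ℝ) (hζ : |ζ| * c ≤ 1) :
    ∫ ω, Real.exp (ζ * Y ω) ∂ℙ ≤ Real.exp (8 * ζ ^ 2 * M * c) := by
  have hYint : Integrable Y ℙ :=
    (integrable_const c).mono' hmeas.aestronglyMeasurable
      (by filter_upwards [hbdd] with ω h using h)
  have habsint : Integrable (fun ω => |Y ω|) ℙ := hYint.abs
  have hexpint : Integrable (fun ω => Real.exp (ζ * Y ω)) ℙ := by
    refine (integrable_const (Real.exp (|ζ| * c))).mono'
      (hmeas.const_mul ζ).exp.aestronglyMeasurable ?_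
    filter_upwards [hbdd] with ω h
    rw [Real.norm_eq_abs, abs_of_pos (Real.exp_pos _)]
    apply Real.exp_le_exp.mpr
    calc ζ * Y ω ≤ |ζ * Y ω| := le_abs_self _
      _ = |ζ| * |Y ω| := abs_mul _ _
      _ ≤ |ζ| * c := by
          exact mul_le_mul_of_nonneg_left h (abs_nonneg _)
  have hRHSint : Integrable (fun ω => 1 + ζ * Y ω + 2 * ζ ^ 2 * c * |Y ω|) ℙ :=
    ((integrable_const 1).add (hYint.const_mul ζ)).add (habsint.const_mul _)
  have hpt : ∀ᵐ ω ∂ℙ, Real.exp (ζ * Y ω) ≤ 1 + ζ * Y ω + 2 * ζ ^ 2 * c * |Y ω| := by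
    filter_upwards [hbdd] with ω h
    have hx : |ζ * Y ω| ≤ 1 := by
      rw [abs_mul]
      calc |ζ| * |Y ω| ≤ |ζ| * c := mul_le_mul_of_nonneg_left h (abs_nonneg _)
        _ ≤ 1 := hζ
    refine (exp_le_one_add_add_two_sq hx).trans ?_
    have hsq : (ζ * Y ω) ^ 2 ≤ ζ ^ 2 * (c * |Y ω|) := by
      have : (Y ω) ^ 2 ≤ c * |Y ω| := by
        nlinarith [sq_abs (Y ω), abs_nonneg (Y ω)]
      nlinarith [sq_nonneg ζ]
    nlinarith
  calc ∫ ω, Real.exp (ζ * Y ω) ∂ℙ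
      ≤ ∫ ω, (1 + ζ * Y ω + 2 * ζ ^ 2 * c * |Y ω|) ∂ℙ :=
        integral_mono_ae hexpint hRHSint hpt
    _ = 1 + ζ * ∫ ω, Y ω ∂ℙ + 2 * ζ ^ 2 * c * ∫ ω, |Y ω| ∂ℙ := by
        have hI1 : Integrable (fun ω => 1 + ζ * Y ω) ℙ :=
          (integrable_const 1).add (hYint.const_mul ζ)
        have hI2 : Integrable (fun ω => 2 * ζ ^ 2 * c * |Y ω|) ℙ := habsint.const_mul _
        rw [integral_add hI1 hI2, integral_add (integrable_const 1) (hYint.const_mul ζ),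
          integral_const, integral_const_mul, integral_const_mul]
        simp
    _ = 1 + 2 * ζ ^ 2 * c * ∫ ω, |Y ω| ∂ℙ := by rw [hmean]; ring
    _ ≤ 1 + 8 * ζ ^ 2 * M * c := by 
        have h1 : 2 * ζ ^ 2 * c * ∫ ω, |Y ω| ∂ℙ ≤ 2 * ζ ^ 2 * c * M :=
          mul_le_mul_of_nonneg_left habs (by positivity)
        nlinarith [mul_nonneg (mul_nonneg (sq_nonneg ζ) hM.le) hc.le]
    _ ≤ Real.exp (8 * ζ ^ 2 * M * c) := by
        have := Real.add_one_le_exp (8 * ζ ^ 2 * M * c)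
        linarith
end
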